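/- Let k be a positive integer that is not of the form 2^a + 2^b for nonnegative integers a, b (equivalently, wt(k) > 2). Then there are no integers x and y such that s_{k,k}·x² + s_{2k}·y = 1 or s_{k,k}·x² + s_{2k}·y = −1. (This is the arithmetic content of the theorem that a rational projective plane of dimension 8k can exist only when k = 2^a + 2^b: the Hirzebruch signature equation has no integer solutions otherwise.) -/

import Mathlib

open Nat

/-- `wt k` is the Hamming weight of `k`, i.e. the number of ones in its binary expansion. -/
def wt (k : ℕ) : ℕ := (Nat.digits 2 k).sum

/-- `sL k = 2^(2k) * (2^(2k-1) - 1) * |B_(2k)| / (2k)!` is the coefficient of `p_k`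
in the k-th Hirzebruch L-polynomial. -/
noncomputable def sL (k : ℕ) : ℚ :=
  2 ^ (2 * k) * (2 ^ (2 * k - 1) - 1) * |bernoulli (2 * k)| / ((2 * k)! : ℚ)

/-- `sLL k = (sL k ^ 2 - sL (2k)) / 2` is the coefficient of `p_k ^ 2`
in the 2k-th Hirzebruch L-polynomial. -/
noncomputable def sLL (k : ℕ) : ℚ := (sL k ^ 2 - sL (2 * k)) / 2

open Finset in

lemma myNormNat (m : ℕ) (h : m ≠ 0) :
    padicNorm 2 (m : ℚ) = (2:ℚ) ^ (-(padicValNat 2 m : ℤ)) := by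
  have h' : (m:ℚ) ≠ 0 := by exact_mod_cast h
  rw [padicNorm.eq_zpow_of_nonzero h', padicValRat.of_nat]
  norm_num

lemma myNormTwoPow (m : ℕ) :
    padicNorm 2 ((2:ℚ) ^ m) = (2:ℚ) ^ (-(m : ℤ)) := by
  rw [show ((2:ℚ)^m) = ((2^m : ℕ) : ℚ) by push_cast; ring,
    myNormNat _ (by positivity), padicValNat.prime_pow]

lemma myValLe {j : ℕ} : padicValNat 2 (j + 1) ≤ j := by
  have h1 : 2 ^ padicValNat 2 (j+1) ∣ (j+1) := pow_padicValNat_dvd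
  have h2 : 2 ^ padicValNat 2 (j+1) ≤ j + 1 := Nat.le_of_dvd (by omega) h1
  have h3 : j + 1 ≤ 2 ^ j := Nat.lt_two_pow_self (n := j)
  exact (Nat.pow_le_pow_iff_right (by norm_num)).mp (h2.trans h3)

lemma myChooseId {n i : ℕ} (h : i ≤ n) :
    (n + 1 - i) * (n + 1).choose i = (n + 1) * n.choose i := by
  have h1 := Nat.add_one_mul_choose_eq n (n - i)
  rw [Nat.choose_symm h] at h1
  have h2 : (n+1).choose (n - i + 1) = (n+1).choose i := by
    have := Nat.choose_symm (n := n+1) (k := i) (by omega)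
    rw [show n + 1 - i = n - i + 1 by omega] at this
    exact this
  rw [h2] at h1
  rw [show n + 1 - i = n - i + 1 by omega]
  simpa [Nat.succ_eq_add_one, mul_comm] using h1.symm

lemma myNormTwo : padicNorm 2 (2:ℚ) = 2⁻¹ := by
  have := padicNorm.padicNorm_p (p := 2) (by norm_num)
  simpa using this

lemma bernoulli_norm_le (n : ℕ) : padicNorm 2 (bernoulli n) ≤ 2 := by
  induction n using Nat.strong_induction_on with
  | _ n ih =>
  rcases Nat.eq_zero_or_pos n with rfl | hn
  · simp
  have key := sum_range_pow 2 n
  have hlhs : (∑ k ∈ Finset.range 2, (k : ℚ) ^ n) = 1 := by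
    rw [Finset.sum_range_succ, Finset.sum_range_one]
    norm_num [zero_pow hn.ne']
  rw [hlhs] at key
  push_cast at key
  rw [Finset.sum_range_succ] at key
  have hlast : bernoulli n * ((n + 1).choose n) * (2:ℚ) ^ (n + 1 - n) / ((n:ℚ) + 1)
      = 2 * bernoulli n := by
    have hne : ((n:ℚ) + 1) ≠ 0 := by positivity
    rw [Nat.choose_succ_self_right, show n + 1 - n = 1 by omega]
    push_cast
    field_simp
  rw [hlast] at key
  set S := ∑ i ∈ Finset.range n, bernoulli i * ((n + 1).choose i) * (2:ℚ) ^ (n + 1 - i) / ((n:ℚ) + 1)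
    with hS
  have hb : bernoulli n = (1 - S) / 2 := by linarith
  have hSle : padicNorm 2 S ≤ 1 := by
    apply padicNorm.sum_le' _ (by norm_num)
    intro i hi
    rw [Finset.mem_range] at hi
    have hiden : ((n + 1 - i : ℕ) : ℚ) ≠ 0 := by
      have : 0 < n + 1 - i := by omega
      exact_mod_cast this.ne'
    have hterm : bernoulli i * ((n + 1).choose i) * (2:ℚ) ^ (n + 1 - i) / ((n:ℚ) + 1)
        = bernoulli i * (n.choose i) * (2:ℚ) ^ (n + 1 - i) / ((n + 1 - i : ℕ) : ℚ) := by
      rw [div_eq_div_iff (by positivity) hiden]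
      have hc : ((n + 1 - i : ℕ) : ℚ) * ((n + 1).choose i) = ((n:ℚ) + 1) * (n.choose i) := by
        exact_mod_cast congrArg (Nat.cast : ℕ → ℚ) (myChooseId hi.le)
      calc bernoulli i * ((n + 1).choose i) * (2:ℚ) ^ (n + 1 - i) * ((n + 1 - i : ℕ) : ℚ)
          = bernoulli i * (2:ℚ) ^ (n + 1 - i) * (((n + 1 - i : ℕ) : ℚ) * ((n + 1).choose i)) := by
            ring
        _ = bernoulli i * (2:ℚ) ^ (n + 1 - i) * (((n:ℚ) + 1) * (n.choose i)) := by rw [hc]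
        _ = bernoulli i * ↑(n.choose i) * 2 ^ (n + 1 - i) * ((n:ℚ) + 1) := by ring
    rw [hterm, padicNorm.div, padicNorm.mul, padicNorm.mul,
      myNormTwoPow (n + 1 - i), myNormNat (n + 1 - i) (by omega)]
    have hB := ih i hi
    have hC : padicNorm 2 ((n.choose i : ℕ) : ℚ) ≤ 1 := padicNorm.of_nat _
    have hvle : padicValNat 2 (n + 1 - i) ≤ n - i := by
      rw [show n + 1 - i = (n - i) + 1 by omega]
      exact myValLe
    set v := padicValNat 2 (n + 1 - i) with hv
    have hAB : padicNorm 2 (bernoulli i) * padicNorm 2 ((n.choose i : ℕ) : ℚ) ≤ 2 := by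
      calc padicNorm 2 (bernoulli i) * padicNorm 2 ((n.choose i : ℕ) : ℚ)
          ≤ 2 * 1 := mul_le_mul hB hC (padicNorm.nonneg _) (by norm_num)
        _ = 2 := by norm_num
    have hpos : (0:ℚ) ≤ (2:ℚ) ^ (-((n + 1 - i : ℕ) : ℤ)) / (2:ℚ) ^ (-(v : ℤ)) := by
      positivity
    have heq : (2:ℚ) ^ (1 - ((n + 1 - i : ℕ) : ℤ) + v)
        = 2 * ((2:ℚ) ^ (-((n + 1 - i : ℕ) : ℤ)) / (2:ℚ) ^ (-(v : ℤ))) := by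
      rw [zpow_add₀ (two_ne_zero : (2:ℚ) ≠ 0), zpow_sub₀ (two_ne_zero : (2:ℚ) ≠ 0),
        zpow_one, zpow_neg, zpow_neg]
      field_simp
    have hexp : 1 - ((n + 1 - i : ℕ) : ℤ) + (v : ℤ) ≤ 0 := by
      have h1 : i < n := hi
      omega
    calc padicNorm 2 (bernoulli i) * padicNorm 2 ((n.choose i : ℕ) : ℚ)
          * (2:ℚ) ^ (-((n + 1 - i : ℕ) : ℤ)) / (2:ℚ) ^ (-(v : ℤ))
        = padicNorm 2 (bernoulli i) * padicNorm 2 ((n.choose i : ℕ) : ℚ)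
          * ((2:ℚ) ^ (-((n + 1 - i : ℕ) : ℤ)) / (2:ℚ) ^ (-(v : ℤ))) := by ring
      _ ≤ 2 * ((2:ℚ) ^ (-((n + 1 - i : ℕ) : ℤ)) / (2:ℚ) ^ (-(v : ℤ))) :=
          mul_le_mul_of_nonneg_right hAB hpos
      _ = (2:ℚ) ^ (1 - ((n + 1 - i : ℕ) : ℤ) + v) := heq.symm
      _ ≤ (2:ℚ) ^ (0:ℤ) := zpow_le_zpow_right₀ (by norm_num) hexp
      _ = 1 := by norm_num
  rw [hb, padicNorm.div, myNormTwo]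
  have h1S : padicNorm 2 (1 - S) ≤ 1 := by
    refine padicNorm.sub.trans ?_
    simp [padicNorm.one, hSle]
  calc padicNorm 2 (1 - S) / 2⁻¹ = 2 * padicNorm 2 (1 - S) := by ring
    _ ≤ 2 * 1 := by linarith
    _ = 2 := by norm_num



lemma wt_two_mul {m : ℕ} (hm : m ≠ 0) : wt (2 * m) = wt m := by
  unfold wt
  rw [Nat.digits_def' (by norm_num : 1 < 2) (by positivity)]
  simp [Nat.mul_div_cancel_left m (by norm_num : 0 < 2), Nat.mul_mod_right]

lemma wt_le (m : ℕ) : wt m ≤ m := by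
  induction m using Nat.strong_induction_on with
  | _ m ih =>
  rcases Nat.eq_zero_or_pos m with rfl | hm
  · simp [wt]
  unfold wt
  rw [Nat.digits_def' (by norm_num : 1 < 2) hm]
  have h1 : wt (m / 2) ≤ m / 2 := ih (m / 2) (by omega)
  have h2 : m % 2 ≤ 1 := by omega
  unfold wt at h1
  simp only [List.sum_cons]
  omega

lemma val_factorial (m : ℕ) : padicValNat 2 (m !) = m - wt m := by
  have := sub_one_mul_padicValNat_factorial (p := 2) m
  simpa [wt] using this

section FPART
open Nat

lemma padicNorm_abs (q : ℚ) : padicNorm 2 |q| = padicNorm 2 q := by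
  rcases abs_choice q with h | h
  · rw [h]
  · rw [h, padicNorm.neg]

lemma sL_norm {m : ℕ} (hm : 0 < m) : padicNorm 2 (sL m) ≤ (2:ℚ) ^ (1 - (wt m : ℤ)) := by
  have hwtle : wt m ≤ 2 * m := (wt_le m).trans (by omega)
  have hF : padicValNat 2 ((2 * m)!) = 2 * m - wt m := by
    rw [val_factorial, wt_two_mul hm.ne']
  have hD : padicNorm 2 (((2 * m)! : ℕ) : ℚ) = (2:ℚ) ^ (-((2 * m - wt m : ℕ) : ℤ)) := by
    rw [myNormNat _ (Nat.factorial_ne_zero _), hF]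
  have hmid : padicNorm 2 ((2:ℚ) ^ (2 * m - 1) - 1) ≤ 1 := by
    have h : ((2:ℚ) ^ (2 * m - 1) - 1) = (((2 ^ (2 * m - 1) - 1 : ℤ)) : ℚ) := by
      push_cast; ring
    rw [h]
    exact padicNorm.of_int _
  have hb : padicNorm 2 |bernoulli (2 * m)| ≤ 2 := by
    rw [padicNorm_abs]; exact bernoulli_norm_le _
  unfold sL
  rw [padicNorm.div, padicNorm.mul, padicNorm.mul, myNormTwoPow (2 * m), hD]
  have hpos : (0:ℚ) ≤ (2:ℚ) ^ (-((2 * m : ℕ) : ℤ)) / (2:ℚ) ^ (-((2 * m - wt m : ℕ) : ℤ)) := by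
    positivity
  have hMB : padicNorm 2 ((2:ℚ) ^ (2 * m - 1) - 1) * padicNorm 2 |bernoulli (2 * m)| ≤ 2 := by
    calc padicNorm 2 ((2:ℚ) ^ (2 * m - 1) - 1) * padicNorm 2 |bernoulli (2 * m)|
        ≤ 1 * 2 := mul_le_mul hmid hb (padicNorm.nonneg _) (by norm_num)
      _ = 2 := by norm_num
  have heq : (2:ℚ) * ((2:ℚ) ^ (-((2 * m : ℕ) : ℤ)) / (2:ℚ) ^ (-((2 * m - wt m : ℕ) : ℤ)))
      = (2:ℚ) ^ (1 - (wt m : ℤ)) := by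
    have he : (1 : ℤ) - (wt m : ℤ) = 1 + (-((2 * m : ℕ) : ℤ)) + ((2 * m - wt m : ℕ) : ℤ) := by
      omega
    rw [he, zpow_add₀ (two_ne_zero : (2:ℚ) ≠ 0), zpow_add₀ (two_ne_zero : (2:ℚ) ≠ 0),
      zpow_one, zpow_neg, zpow_neg]
    field_simp
  calc (2:ℚ) ^ (-((2 * m : ℕ) : ℤ)) * padicNorm 2 ((2:ℚ) ^ (2 * m - 1) - 1)
        * padicNorm 2 |bernoulli (2 * m)| / (2:ℚ) ^ (-((2 * m - wt m : ℕ) : ℤ))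
      = (padicNorm 2 ((2:ℚ) ^ (2 * m - 1) - 1) * padicNorm 2 |bernoulli (2 * m)|)
        * ((2:ℚ) ^ (-((2 * m : ℕ) : ℤ)) / (2:ℚ) ^ (-((2 * m - wt m : ℕ) : ℤ))) := by ring
    _ ≤ 2 * ((2:ℚ) ^ (-((2 * m : ℕ) : ℤ)) / (2:ℚ) ^ (-((2 * m - wt m : ℕ) : ℤ))) :=
        mul_le_mul_of_nonneg_right hMB hpos
    _ = (2:ℚ) ^ (1 - (wt m : ℤ)) := heq

/-- If `k` is a positive integer which is not of the form `2^a + 2^b`, i.e. `wt k > 2`,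
then the signature equation `s_(k,k) x² + s_(2k) y = ±1` has no integer solutions. -/
theorem no_solution_of_two_lt_wt (k : ℕ) (hk : 0 < k) (hwt : 2 < wt k) :
    ¬ ∃ x y : ℤ, sLL k * (x : ℚ) ^ 2 + sL (2 * k) * (y : ℚ) = 1 ∨
      sLL k * (x : ℚ) ^ 2 + sL (2 * k) * (y : ℚ) = -1 := by
  rintro ⟨x, y, h⟩
  have hbound : ∀ q : ℚ, (1 - (wt q.num.natAbs : ℤ)) ≤ 0 → True := fun _ _ => trivial
  -- norms of the two coefficients
  have h2k : (2:ℚ) ^ (1 - (wt k : ℤ)) ≤ (4:ℚ)⁻¹ := by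
    have : (1 : ℤ) - (wt k : ℤ) ≤ -2 := by
      have : (3:ℤ) ≤ (wt k : ℤ) := by exact_mod_cast hwt
      omega
    calc (2:ℚ) ^ (1 - (wt k : ℤ)) ≤ (2:ℚ) ^ (-2 : ℤ) := zpow_le_zpow_right₀ (by norm_num) this
      _ = (4:ℚ)⁻¹ := by norm_num
  have hsk : padicNorm 2 (sL k) ≤ (4:ℚ)⁻¹ := (sL_norm hk).trans h2k
  have hs2k : padicNorm 2 (sL (2 * k)) ≤ (4:ℚ)⁻¹ := by
    refine (sL_norm (by omega)).trans ?_
    rw [wt_two_mul hk.ne']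
    exact h2k
  have hsLL : padicNorm 2 (sLL k) ≤ (2:ℚ)⁻¹ := by
    unfold sLL
    rw [padicNorm.div, myNormTwo]
    have hdiff : padicNorm 2 (sL k ^ 2 - sL (2 * k)) ≤ (4:ℚ)⁻¹ := by
      refine padicNorm.sub.trans (max_le ?_ hs2k)
      rw [show sL k ^ 2 = sL k * sL k by ring, padicNorm.mul]
      calc padicNorm 2 (sL k) * padicNorm 2 (sL k) ≤ (4:ℚ)⁻¹ * 1 := by
            apply mul_le_mul hsk _ (padicNorm.nonneg _) (by norm_num)
            exact hsk.trans (by norm_num)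
        _ ≤ (4:ℚ)⁻¹ := by norm_num
    calc padicNorm 2 (sL k ^ 2 - sL (2 * k)) / 2⁻¹
        = 2 * padicNorm 2 (sL k ^ 2 - sL (2 * k)) := by ring
      _ ≤ 2 * (4:ℚ)⁻¹ := by linarith
      _ = (2:ℚ)⁻¹ := by norm_num
  have hx : padicNorm 2 ((x : ℚ) ^ 2) ≤ 1 := by
    rw [show ((x:ℚ))^2 = (((x^2 : ℤ)):ℚ) by push_cast; ring]
    exact padicNorm.of_int _
  have hy : padicNorm 2 ((y : ℚ)) ≤ 1 := padicNorm.of_int _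
  have hterm1 : padicNorm 2 (sLL k * (x : ℚ) ^ 2) ≤ (2:ℚ)⁻¹ := by
    rw [padicNorm.mul]
    calc padicNorm 2 (sLL k) * padicNorm 2 ((x:ℚ)^2) ≤ (2:ℚ)⁻¹ * 1 :=
          mul_le_mul hsLL hx (padicNorm.nonneg _) (by norm_num)
      _ = (2:ℚ)⁻¹ := by norm_num
  have hterm2 : padicNorm 2 (sL (2 * k) * (y : ℚ)) ≤ (2:ℚ)⁻¹ := by
    rw [padicNorm.mul]
    calc padicNorm 2 (sL (2 * k)) * padicNorm 2 ((y:ℚ)) ≤ (4:ℚ)⁻¹ * 1 :=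
          mul_le_mul hs2k hy (padicNorm.nonneg _) (by norm_num)
      _ ≤ (2:ℚ)⁻¹ := by norm_num
  have hsum : padicNorm 2 (sLL k * (x : ℚ) ^ 2 + sL (2 * k) * (y : ℚ)) ≤ (2:ℚ)⁻¹ :=
    padicNorm.nonarchimedean.trans (max_le hterm1 hterm2)
  rcases h with h | h <;> rw [h] at hsum
  · rw [padicNorm.one] at hsum; norm_num at hsum
  · rw [show ((-1 : ℚ)) = -(1:ℚ) by ring, padicNorm.neg, padicNorm.one] at hsum
    norm_num at hsum

end FPART
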